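/- Let p, ℓ be integers with 0 ≤ ℓ < p. Then every solution a : (−1,1) → ℝ of the Jacobi-type ODE with parameters (p, ℓ) extends to a polynomial function on all of ℝ; in particular, every solution is real-analytic at τ = 1 and at τ = −1. -/

import Mathlib

/-!
Substituting `a = ∑ cₖ τᵏ` into the equation gives the two-step recurrence
`(k + 1)(k + 2) c_{k+2} = (k - (p - ℓ - 1))(k - (p + ℓ)) c_k`. Since `ℓ < p`, its two roots
`p - ℓ - 1` and `p + ℓ` are natural numbers of opposite parity, so both the even and the odd
chain of coefficients terminate: for all initial data `(c₀, c₁)` there is a polynomial solution.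
On `(-1, 1)` the equation is a regular linear second-order ODE, so by uniqueness for the associated
first-order system every solution coincides with the polynomial solution having the same value
and derivative at `0`.
-/

/-- `a` solves the Jacobi-type ODE
`(1−τ²)a'' + 2(p−1)τ a' + (ℓ(ℓ+1) − p(p−1)) a = 0` on `(−1,1)`. -/
def JacobiODESol (p ℓ : ℕ) (a : ℝ → ℝ) : Prop :=
  ∀ τ ∈ Set.Ioo (-1 : ℝ) 1,
    (1 - τ ^ 2) * deriv (deriv a) τ + 2 * ((p : ℝ) - 1) * τ * deriv a τ
      + ((ℓ : ℝ) * ((ℓ : ℝ) + 1) - (p : ℝ) * ((p : ℝ) - 1)) * a τ = 0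

open Set NNReal Polynomial

lemma lipschitzWith_companion (α β : ℝ) (M : ℝ≥0) (hα : |α| ≤ M) (hβ : |β| ≤ M) :
    LipschitzWith (1 + 2 * M) fun z : ℝ × ℝ => (z.2, α * z.2 + β * z.1) := by
  refine LipschitzWith.of_dist_le_mul fun z w => ?_
  simp only [Prod.dist_eq, Real.dist_eq]
  set m := max |z.1 - w.1| |z.2 - w.2|
  have h1 : |z.1 - w.1| ≤ m := le_max_left _ _
  have h2 : |z.2 - w.2| ≤ m := le_max_right _ _
  have hsum : |α * z.2 + β * z.1 - (α * w.2 + β * w.1)|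
      ≤ |α| * |z.2 - w.2| + |β| * |z.1 - w.1| := by
    rw [← abs_mul, ← abs_mul, show α * z.2 + β * z.1 - (α * w.2 + β * w.1)
      = α * (z.2 - w.2) + β * (z.1 - w.1) by ring]
    exact abs_add_le _ _
  push_cast
  refine max_le (by nlinarith [abs_nonneg (z.1 - w.1)]) ?_
  nlinarith [abs_nonneg (z.1 - w.1), abs_nonneg (z.2 - w.2), abs_nonneg α, abs_nonneg β]

section SecondOrderLinear

variable {α β u u' : ℝ → ℝ} {a b t₀ : ℝ}

theorem eqOn_zero_of_secondOrderLinear_of_bounded {M : ℝ≥0}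
    (hα : ∀ t ∈ Ioo a b, |α t| ≤ M) (hβ : ∀ t ∈ Ioo a b, |β t| ≤ M)
    (hu : ∀ t ∈ Ioo a b, HasDerivAt u (u' t) t)
    (hu' : ∀ t ∈ Ioo a b, HasDerivAt u' (α t * u' t + β t * u t) t)
    (ht₀ : t₀ ∈ Ioo a b) (h0 : u t₀ = 0) (h0' : u' t₀ = 0) :
    EqOn u 0 (Ioo a b) := fun t ht =>
  congrArg Prod.fst <| ODE_solution_unique_of_mem_Ioo (s := fun _ => univ)
    (v := fun t z => (z.2, α t * z.2 + β t * z.1)) (g := fun _ => 0)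
    (fun t ht => (lipschitzWith_companion _ _ M (hα t ht) (hβ t ht)).lipschitzOnWith) ht₀
    (fun t ht => ⟨(hu t ht).prodMk (hu' t ht), mem_univ _⟩)
    (fun t _ => ⟨by simpa [← Prod.zero_eq_mk] using hasDerivAt_const t (0 : ℝ × ℝ),
      mem_univ _⟩)
    (Prod.ext h0 h0') ht

theorem eqOn_zero_of_secondOrderLinear_of_continuousOn
    (hα : ContinuousOn α (Ioo a b)) (hβ : ContinuousOn β (Ioo a b))
    (hu : ∀ t ∈ Ioo a b, HasDerivAt u (u' t) t)
    (hu' : ∀ t ∈ Ioo a b, HasDerivAt u' (α t * u' t + β t * u t) t)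
    (ht₀ : t₀ ∈ Ioo a b) (h0 : u t₀ = 0) (h0' : u' t₀ = 0) :
    EqOn u 0 (Ioo a b) := by
  intro t ht
  obtain ⟨a', ha', ha'_lt⟩ := exists_between (lt_min ht.1 ht₀.1)
  obtain ⟨b', hb'_gt, hb'⟩ := exists_between (max_lt ht.2 ht₀.2)
  have hsub : Icc a' b' ⊆ Ioo a b := Icc_subset_Ioo ha' hb'
  have hmem : ∀ x, min t t₀ ≤ x → x ≤ max t t₀ → x ∈ Ioo a' b' := fun x h1 h2 =>
    ⟨ha'_lt.trans_le h1, h2.trans_lt hb'_gt⟩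
  obtain ⟨Mα, hMα⟩ := isCompact_Icc.exists_bound_of_continuousOn (hα.mono hsub)
  obtain ⟨Mβ, hMβ⟩ := isCompact_Icc.exists_bound_of_continuousOn (hβ.mono hsub)
  have hIoo : Ioo a' b' ⊆ Ioo a b := Ioo_subset_Icc_self.trans hsub
  have hM : max Mα Mβ ≤ (max Mα Mβ).toNNReal := Real.le_coe_toNNReal _
  exact eqOn_zero_of_secondOrderLinear_of_bounded (M := (max Mα Mβ).toNNReal)
    (fun s hs => (hMα s (Ioo_subset_Icc_self hs)).trans ((le_max_left _ _).trans hM))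
    (fun s hs => (hMβ s (Ioo_subset_Icc_self hs)).trans ((le_max_right _ _).trans hM))
    (fun s hs => hu s (hIoo hs)) (fun s hs => hu' s (hIoo hs))
    (hmem t₀ (min_le_right _ _) (le_max_right _ _)) h0 h0'
    (hmem t (min_le_left _ _) (le_max_left _ _))

end SecondOrderLinear

lemma deriv_eval_eq_eval_derivative {𝕜 : Type*} [NontriviallyNormedField 𝕜]
    (q : 𝕜[X]) :
    deriv (fun x => q.eval x) = fun x => q.derivative.eval x :=
  funext fun _ => q.deriv

lemma coeff_jacobi_operator (p ℓ : ℕ) (q : ℝ[X]) (n : ℕ) :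
    ((1 - X ^ 2) * derivative (derivative q) + C (2 * ((p : ℝ) - 1)) * (X * derivative q)
      + C ((ℓ : ℝ) * (ℓ + 1) - p * (p - 1)) * q).coeff n
      = (n + 1) * (n + 2) * q.coeff (n + 2)
        - (n - (p - ℓ - 1)) * (n - (p + ℓ)) * q.coeff n := by
  rcases n with _ | _ | n <;>
    simp only [coeff_add, coeff_sub, coeff_C_mul, sub_mul, one_mul, coeff_X_pow_mul',
      coeff_X_mul, coeff_X_mul_zero, coeff_derivative, Nat.reduceSubDiff] <;> norm_num <;> ring

lemma jacobiODESol_eval_of_coeff {p ℓ : ℕ} {q : ℝ[X]}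
    (hq : ∀ n : ℕ, (n + 1) * (n + 2) * q.coeff (n + 2)
      = (n - (p - ℓ - 1 : ℝ)) * (n - (p + ℓ : ℝ)) * q.coeff n) :
    JacobiODESol p ℓ fun x => q.eval x := by
  have hop : (1 - X ^ 2) * derivative (derivative q) + C (2 * ((p : ℝ) - 1)) * (X * derivative q)
      + C ((ℓ : ℝ) * (ℓ + 1) - p * (p - 1)) * q = 0 := by
    ext n
    rw [coeff_jacobi_operator, hq, sub_self, coeff_zero]
  intro τ _
  have := congrArg (eval τ) hop
  simp only [eval_add, eval_mul, eval_sub, eval_one, eval_pow, eval_X, eval_C, eval_zero] at this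
  rw [deriv_eval_eq_eval_derivative q, deriv_eval_eq_eval_derivative q.derivative]
  linear_combination this

section TwoStepRecurrence

variable {R : Type*} [MulZeroClass R] {c r : ℕ → R}

lemma eq_zero_of_two_step_of_eq_zero (hc : ∀ k, c (k + 2) = r k * c k) {m : ℕ} (hm : r m = 0)
    (j : ℕ) : c (m + 2 + 2 * j) = 0 := by
  induction j with
  | zero => rw [hc, hm, zero_mul]
  | succ j ih => rw [show m + 2 + 2 * (j + 1) = m + 2 + 2 * j + 2 by ring, hc, ih, mul_zero]

lemma eq_zero_of_two_step_of_odd (hc : ∀ k, c (k + 2) = r k * c k) {m m' : ℕ} (hm : r m = 0)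
    (hm' : r m' = 0) (hodd : Odd (m + m')) {k : ℕ} (hk : max m m' < k) : c k = 0 := by
  obtain ⟨i, hi⟩ := hodd
  rcases Nat.even_or_odd (k + m) with ⟨t, ht⟩ | ⟨t, ht⟩
  · obtain ⟨j, rfl⟩ : ∃ j, k = m + 2 + 2 * j := ⟨(k - m - 2) / 2, by omega⟩
    exact eq_zero_of_two_step_of_eq_zero hc hm j
  · obtain ⟨j, rfl⟩ : ∃ j, k = m' + 2 + 2 * j := ⟨(k - m' - 2) / 2, by omega⟩
    exact eq_zero_of_two_step_of_eq_zero hc hm' j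

end TwoStepRecurrence

noncomputable def jacobiRatio (p ℓ k : ℕ) : ℝ :=
  (k - (p - ℓ - 1 : ℝ)) * (k - (p + ℓ : ℝ)) / ((k + 1) * (k + 2))

noncomputable def jacobiCoeff (p ℓ : ℕ) (c₀ c₁ : ℝ) : ℕ → ℝ
  | 0 => c₀
  | 1 => c₁
  | k + 2 => jacobiRatio p ℓ k * jacobiCoeff p ℓ c₀ c₁ k

noncomputable def jacobiPoly (p ℓ : ℕ) (c₀ c₁ : ℝ) : ℝ[X] :=
  ∑ k ∈ Finset.range (p + ℓ + 1), monomial k (jacobiCoeff p ℓ c₀ c₁ k)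

section JacobiPoly

variable {p ℓ : ℕ} (c₀ c₁ : ℝ)

lemma jacobiCoeff_eq_zero (h : ℓ < p) {k : ℕ} (hk : p + ℓ < k) :
    jacobiCoeff p ℓ c₀ c₁ k = 0 := by
  have hcast : ((p - ℓ - 1 : ℕ) : ℝ) = p - ℓ - 1 := by
    rw [Nat.cast_sub (by omega), Nat.cast_sub h.le, Nat.cast_one]
  refine eq_zero_of_two_step_of_odd (r := jacobiRatio p ℓ) (fun _ => rfl) (m := p - ℓ - 1)
    (m' := p + ℓ) ?_ ?_ ⟨p - 1, by omega⟩ (by omega)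
  · rw [jacobiRatio, hcast, sub_self, zero_mul, zero_div]
  · rw [jacobiRatio, Nat.cast_add, sub_self, mul_zero, zero_div]

lemma coeff_jacobiPoly (h : ℓ < p) (n : ℕ) :
    (jacobiPoly p ℓ c₀ c₁).coeff n = jacobiCoeff p ℓ c₀ c₁ n := by
  simp only [jacobiPoly, finsetSum_coeff, coeff_monomial, Finset.sum_ite_eq', Finset.mem_range]
  split_ifs with hn
  · rfl
  · exact (jacobiCoeff_eq_zero c₀ c₁ h (by omega)).symm

lemma jacobiODESol_jacobiPoly (h : ℓ < p) :
    JacobiODESol p ℓ fun x => (jacobiPoly p ℓ c₀ c₁).eval x := by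
  refine jacobiODESol_eval_of_coeff fun n => ?_
  rw [coeff_jacobiPoly _ _ h, coeff_jacobiPoly _ _ h, jacobiCoeff, jacobiRatio]
  field_simp

lemma jacobiPoly_eval_zero (h : ℓ < p) : (jacobiPoly p ℓ c₀ c₁).eval 0 = c₀ := by
  rw [← coeff_zero_eq_eval_zero, coeff_jacobiPoly _ _ h, jacobiCoeff]

lemma deriv_jacobiPoly_eval_zero (h : ℓ < p) :
    deriv (fun x => (jacobiPoly p ℓ c₀ c₁).eval x) 0 = c₁ := by
  rw [Polynomial.deriv, ← coeff_zero_eq_eval_zero, coeff_derivative, coeff_jacobiPoly _ _ h,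
    jacobiCoeff]
  norm_num

end JacobiPoly

lemma JacobiODESol.eqOn {p ℓ : ℕ} {a b : ℝ → ℝ}
    (ha : JacobiODESol p ℓ a) (hb : JacobiODESol p ℓ b)
    (ha₁ : ∀ τ ∈ Ioo (-1 : ℝ) 1, DifferentiableAt ℝ a τ)
    (ha₂ : ∀ τ ∈ Ioo (-1 : ℝ) 1, DifferentiableAt ℝ (deriv a) τ)
    (hb₁ : ∀ τ ∈ Ioo (-1 : ℝ) 1, DifferentiableAt ℝ b τ)
    (hb₂ : ∀ τ ∈ Ioo (-1 : ℝ) 1, DifferentiableAt ℝ (deriv b) τ)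
    (h₀ : a 0 = b 0) (h₀' : deriv a 0 = deriv b 0) :
    EqOn a b (Ioo (-1) 1) := by
  have hpos : ∀ τ ∈ Ioo (-1 : ℝ) 1, 0 < 1 - τ ^ 2 := fun τ hτ =>
    sub_pos.2 (sq_lt_one_iff_abs_lt_one _ |>.2 (abs_lt.2 hτ))
  have hcont (c : ℝ → ℝ) (hc : Continuous c) :
      ContinuousOn (fun τ => c τ / (1 - τ ^ 2)) (Ioo (-1) 1) :=
    hc.continuousOn.div (by fun_prop) fun τ hτ => (hpos τ hτ).ne'
  have hzero := eqOn_zero_of_secondOrderLinear_of_continuousOn (t₀ := 0) (u := a - b)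
    (u' := deriv a - deriv b) (hcont (fun τ => -(2 * ((p : ℝ) - 1) * τ)) (by fun_prop))
    (hcont (fun _ => -((ℓ : ℝ) * (ℓ + 1) - p * (p - 1))) (by fun_prop))
    (fun τ hτ => (ha₁ τ hτ).hasDerivAt.sub (hb₁ τ hτ).hasDerivAt)
    (fun τ hτ => ((ha₂ τ hτ).hasDerivAt.sub (hb₂ τ hτ).hasDerivAt).congr_deriv <| by
      field_simp [(hpos τ hτ).ne']
      simp only [Pi.sub_apply]
      linear_combination ha τ hτ - hb τ hτ)
    (by norm_num) (sub_eq_zero.2 h₀) (sub_eq_zero.2 h₀')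
  exact fun τ hτ => sub_eq_zero.1 (hzero hτ)

/-- For `0 ≤ ℓ < p`, every solution on `(−1,1)` of the Jacobi-type ODE with parameters
`(p, ℓ)` extends to a polynomial function on all of `ℝ`; in particular the extension is
real-analytic at `τ = 1` and at `τ = −1`. -/
theorem stmt8 (p ℓ : ℕ) (h : ℓ < p) (a : ℝ → ℝ)
    (ha : ∀ τ ∈ Set.Ioo (-1 : ℝ) 1, DifferentiableAt ℝ a τ)
    (ha' : ∀ τ ∈ Set.Ioo (-1 : ℝ) 1, DifferentiableAt ℝ (deriv a) τ)
    (hODE : JacobiODESol p ℓ a) :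
    ∃ q : Polynomial ℝ, (∀ τ ∈ Set.Ioo (-1 : ℝ) 1, a τ = q.eval τ) ∧
      AnalyticAt ℝ (fun x : ℝ => q.eval x) 1 ∧
      AnalyticAt ℝ (fun x : ℝ => q.eval x) (-1) := by
  set q := jacobiPoly p ℓ (a 0) (deriv a 0)
  have hanalytic (z : ℝ) : AnalyticAt ℝ (fun x : ℝ => q.eval x) z := by
    simpa [coe_aeval_eq_eval] using
      (analyticAt_id : AnalyticAt ℝ (fun x : ℝ => x) z).aeval_polynomial q
  refine ⟨q, fun τ hτ => ?_, hanalytic 1, hanalytic (-1)⟩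
  exact hODE.eqOn (jacobiODESol_jacobiPoly _ _ h) ha ha' (fun _ _ => q.differentiableAt)
    (fun _ _ => deriv_eval_eq_eval_derivative q ▸ q.derivative.differentiableAt)
    (jacobiPoly_eval_zero _ _ h).symm (deriv_jacobiPoly_eval_zero _ _ h).symm hτ
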